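/- arXiv:1302.5108 — 3 statements merged into one kernel-verified Lean document; each statement's English description precedes it below -/
import Mathlib

section
/- Let V be a real inner product space of dimension 2m+1 equipped with an almost contact metric structure (φ, ξ, η), and let K be a linear subspace of V such that φ(K) = K^⊥. Then ξ ∈ K, dim K = m+1, and dim K^⊥ = m. (This is the pointwise linear-algebra content of Theorem 1: for an anti-invariant Riemannian submersion F from a (2m+1)-dimensional cosymplectic manifold onto an n-dimensional Riemannian manifold with φ(ker F_*) = (ker F_*)^⊥, the characteristic vector field ξ is vertical and m = n.) -/
open scoped RealInnerProductSpace

/-- pointwise linear-algebra content of Theorem 1.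
Let `V` be a real inner product space of dimension `2m+1` equipped with an almost contact
metric structure `(φ, ξ, η)`, and let `K` be a linear subspace of `V` such that
`φ(K) = K^⊥`.  Then `ξ ∈ K`, `dim K = m+1` and `dim K^⊥ = m`. -/
theorem anti_invariant_phiK_eq_Kperp_xi_vertical_and_dims
    {V : Type*} [NormedAddCommGroup V] [InnerProductSpace ℝ V] [FiniteDimensional ℝ V]
    (m : ℕ) (hV : Module.finrank ℝ V = 2 * m + 1)
    (φ : V →ₗ[ℝ] V) (ξ : V) (η : V → ℝ)
    (hη : ∀ X, η X = ⟪X, ξ⟫)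
    (hφ2 : ∀ X, φ (φ X) = -X + η X • ξ)
    (hφξ : φ ξ = 0)
    (hηφ : ∀ X, η (φ X) = 0)
    (hηξ : η ξ = 1)
    (hmetric : ∀ X Y, ⟪φ X, φ Y⟫ = ⟪X, Y⟫ - η X * η Y)
    (K : Submodule ℝ V) (hK : K.map φ = Kᗮ) :
    ξ ∈ K ∧ Module.finrank ℝ K = m + 1 ∧ Module.finrank ℝ Kᗮ = m := by
  have hξK : ξ ∈ K := by
    rw [← Submodule.orthogonal_orthogonal K]
    intro u hu
    rw [← hK] at hu
    obtain ⟨x, -, rfl⟩ := hu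
    have h := hηφ x
    rw [hη] at h
    exact h
  refine ⟨hξK, ?_⟩
  -- kernel of φ restricted to K is spanned by ξ
  have hξ0 : ξ ≠ 0 := by
    intro h
    rw [h] at hηξ; rw [hη] at hηξ; simp at hηξ
  have hker : LinearMap.ker (φ.domRestrict K) = Submodule.span ℝ {(⟨ξ, hξK⟩ : K)} := by
    apply le_antisymm
    · intro x hx
      have hx' : φ (x : V) = 0 := hx
      have h2 := hφ2 (x : V)
      rw [hx', map_zero] at h2
      have hxv : (x : V) = η (x : V) • ξ := by
        have := h2.symm
        linear_combination (norm := module) -this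
      rw [Submodule.mem_span_singleton]
      exact ⟨η (x : V), by ext; simpa using hxv.symm⟩
    · rw [Submodule.span_singleton_le_iff_mem]
      exact hφξ
  have hkerrank : Module.finrank ℝ (LinearMap.ker (φ.domRestrict K)) = 1 := by
    rw [hker]
    apply finrank_span_singleton
    intro h
    apply hξ0
    exact congrArg Subtype.val h
  have hrn := LinearMap.finrank_range_add_finrank_ker (φ.domRestrict K)
  rw [LinearMap.range_domRestrict, hK, hkerrank] at hrn
  have hsum := Submodule.finrank_add_finrank_orthogonal (K := K)
  rw [hV] at hsum
  omega
end

section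
/- For every p ∈ ℝ⁵, let τ = sin(p₁+p₃), let G(p) be the 5×5 matrix with rows (1+τ², 0, τ², 0, −τ), (0, 1, 0, 0, 0), (τ², 0, 1+τ², 0, −τ), (0, 0, 0, 1, 0), (−τ, 0, −τ, 0, 1), and let φ(p) be the 5×5 matrix with rows (0, −1, 0, 0, 0), (1, 0, 0, 0, 0), (0, 0, 0, −1, 0), (0, 0, 1, 0, 0), (0, −τ, 0, −τ, 0). Then for all X, Y ∈ ℝ⁵ the fundamental two-form satisfies (φ(p)X)ᵀ · G(p) · Y = X₁Y₂ − X₂Y₁ + X₃Y₄ − X₄Y₃; that is, the fundamental two-form of the structure of Example 2 is the constant form dx₁∧dx₂ + dx₃∧dx₄ (in particular all dependence on τ cancels, so the form is closed). -/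
open Matrix

noncomputable section

/-- `τ = sin(p₁ + p₃)`. -/
def tau9 (p : Fin 5 → ℝ) : ℝ := Real.sin (p 0 + p 2)

/-- The metric matrix `G(p)` of Example 2. -/
def G9 (p : Fin 5 → ℝ) : Matrix (Fin 5) (Fin 5) ℝ :=
  !![1 + tau9 p ^ 2, 0, tau9 p ^ 2, 0, -tau9 p;
     0, 1, 0, 0, 0;
     tau9 p ^ 2, 0, 1 + tau9 p ^ 2, 0, -tau9 p;
     0, 0, 0, 1, 0;
     -tau9 p, 0, -tau9 p, 0, 1]

/-- The matrix `φ(p)` of Example 2. -/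
def phi9 (p : Fin 5 → ℝ) : Matrix (Fin 5) (Fin 5) ℝ :=
  !![0, -1, 0, 0, 0;
     1, 0, 0, 0, 0;
     0, 0, 0, -1, 0;
     0, 0, 1, 0, 0;
     0, -tau9 p, 0, -tau9 p, 0]

/-!
The metric is `g = dx₁² + dx₂² + dx₃² + dx₄² + η ⊗ η` with `η = dx₅ − τ (dx₁ + dx₃)`, and `φ`
takes values in `ker η`. Hence the `η ⊗ η` part, the only place where `τ` enters `g`, drops out of
`g(φX, Y)`, and what remains is the Euclidean pairing of `φX` with `Y` in the first four
coordinates, i.e. `dx₁∧dx₂ + dx₃∧dx₄`.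
-/

theorem Matrix.dotProduct_add_vecMulVec_mulVec_of_dotProduct_eq_zero {R n : Type*}
    [CommSemiring R] [Fintype n] (D : Matrix n n R) {η v : n → R} (hv : v ⬝ᵥ η = 0)
    (w : n → R) : v ⬝ᵥ ((D + vecMulVec η η) *ᵥ w) = v ⬝ᵥ (D *ᵥ w) := by
  rw [add_mulVec, dotProduct_add, dotProduct_mulVec v (vecMulVec η η), vecMul_vecMulVec, hv,
    zero_smul, zero_dotProduct, add_zero]

def eta9 (p : Fin 5 → ℝ) : Fin 5 → ℝ := ![-tau9 p, 0, -tau9 p, 0, 1]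

theorem G9_eq_diagonal_add_vecMulVec_eta9 (p : Fin 5 → ℝ) :
    G9 p = diagonal ![1, 1, 1, 1, 0] + vecMulVec (eta9 p) (eta9 p) := by
  ext i j
  fin_cases i <;> fin_cases j <;> simp [G9, eta9] <;> ring

theorem phi9_mulVec_dotProduct_eta9 (p X : Fin 5 → ℝ) : phi9 p *ᵥ X ⬝ᵥ eta9 p = 0 := by
  simp [phi9, eta9, dotProduct, mulVec, Fin.sum_univ_five]
  ring

/-- Example 2: the fundamental two-form
`Φ(X,Y) = g(φX, Y) = (φ(p)X)ᵀ G(p) Y` equals the constant form `dx₁∧dx₂ + dx₃∧dx₄`;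
in particular all dependence on `τ` cancels, so the form is closed. -/
theorem example2_fundamental_two_form (p : Fin 5 → ℝ) (X Y : Fin 5 → ℝ) :
    dotProduct ((phi9 p).mulVec X) ((G9 p).mulVec Y) =
      X 0 * Y 1 - X 1 * Y 0 + X 2 * Y 3 - X 3 * Y 2 := by
  rw [G9_eq_diagonal_add_vecMulVec_eta9,
    dotProduct_add_vecMulVec_mulVec_of_dotProduct_eq_zero _ (phi9_mulVec_dotProduct_eta9 p X)]
  simp [phi9, dotProduct, mulVec, Fin.sum_univ_five]
  ring

end
end

section
/- Let F : ℝ⁷ → ℝ⁴ be the linear map F(x₁,x₂,x₃,y₁,y₂,y₃,z) = ((x₁+y₁)/√2, (x₂+y₂)/√2, (x₃+y₃)/√2, (x₃−y₃)/√2), where ℝ⁷ and ℝ⁴ carry the standard Euclidean inner products, and let φ(x₁,x₂,x₃,y₁,y₂,y₃,z) = (y₁,y₂,y₃,−x₁,−x₂,−x₃,0) and ξ = (0,0,0,0,0,0,1) be the standard almost contact structure of Example 1 with n = 3. Then: (i) F is surjective; (ii) ker F = span{(1,0,0,−1,0,0,0), (0,1,0,0,−1,0,0), (0,0,0,0,0,0,1)};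 (iii) ‖F(X)‖ = ‖X‖ for every X ∈ (ker F)^⊥, so F is a Riemannian submersion; (iv) the image of ker F under φ is contained in (ker F)^⊥ but is not equal to (ker F)^⊥; and (v) ξ ∈ ker F. Hence F is an anti-invariant Riemannian submersion with vertical ξ whose horizontal space strictly contains φ(ker F) (Example 5). -/
/-!
The rows of the matrix of `F` are orthonormal, i.e. `F ∘ F* = id`. Hence `F` is surjective, and
since `(ker F)ᗮ = range F*`, every horizontal `X` is `F* y` with
`‖X‖² = ⟪F F* y, y⟫ = ‖y‖² = ‖F X‖²`. Surjectivity gives `dim ker F = 7 - 4 = 3`, so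
`dim φ(ker F) ≤ 3 < 4 = dim (ker F)ᗮ` and the inclusion `φ(ker F) ⊆ (ker F)ᗮ` is strict.
-/
noncomputable section

/-- The linear map
`F(x₁,x₂,x₃,y₁,y₂,y₃,z) = ((x₁+y₁)/√2, (x₂+y₂)/√2, (x₃+y₃)/√2, (x₃−y₃)/√2)` of
Example 5, with coordinates `(x₁,x₂,x₃,y₁,y₂,y₃,z) = (v 0, …, v 6)`. -/
def F12 : EuclideanSpace ℝ (Fin 7) →ₗ[ℝ] EuclideanSpace ℝ (Fin 4) :=
  Matrix.toEuclideanLin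
    !![1 / Real.sqrt 2, 0, 0, 1 / Real.sqrt 2, 0, 0, 0;
       0, 1 / Real.sqrt 2, 0, 0, 1 / Real.sqrt 2, 0, 0;
       0, 0, 1 / Real.sqrt 2, 0, 0, 1 / Real.sqrt 2, 0;
       0, 0, 1 / Real.sqrt 2, 0, 0, -(1 / Real.sqrt 2), 0]

/-- The linear map `φ(x₁,x₂,x₃,y₁,y₂,y₃,z) = (y₁,y₂,y₃,−x₁,−x₂,−x₃,0)` of Example 1
with `n = 3`. -/
def phi12 : EuclideanSpace ℝ (Fin 7) →ₗ[ℝ] EuclideanSpace ℝ (Fin 7) :=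
  Matrix.toEuclideanLin
    !![0, 0, 0, 1, 0, 0, 0;
       0, 0, 0, 0, 1, 0, 0;
       0, 0, 0, 0, 0, 1, 0;
       -1, 0, 0, 0, 0, 0, 0;
       0, -1, 0, 0, 0, 0, 0;
       0, 0, -1, 0, 0, 0, 0;
       0, 0, 0, 0, 0, 0, 0]

/-- The characteristic vector `ξ = (0,0,0,0,0,0,1)`. -/
def xi12 : EuclideanSpace ℝ (Fin 7) := !₂[0, 0, 0, 0, 0, 0, 1]

section Submersion

variable {𝕜 E F : Type*} [RCLike 𝕜]
  [NormedAddCommGroup E] [InnerProductSpace 𝕜 E] [FiniteDimensional 𝕜 E]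
  [NormedAddCommGroup F] [InnerProductSpace 𝕜 F]

namespace LinearMap

theorem finrank_ker_lt_finrank_orthogonal_ker {f : E →ₗ[𝕜] F} (hf : Function.Surjective f)
    (hdim : Module.finrank 𝕜 E < 2 * Module.finrank 𝕜 F) :
    Module.finrank 𝕜 (ker f) < Module.finrank 𝕜 (ker f)ᗮ := by
  have hrank := f.finrank_range_add_finrank_ker
  have horth := (ker f).finrank_add_finrank_orthogonal
  rw [range_eq_top.mpr hf, finrank_top] at hrank
  omega

variable [FiniteDimensional 𝕜 F]

theorem surjective_of_comp_adjoint_eq_id {f : E →ₗ[𝕜] F} (hf : f ∘ₗ f.adjoint = id) :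
    Function.Surjective f :=
  fun y => ⟨f.adjoint y, LinearMap.congr_fun hf y⟩

theorem norm_map_of_mem_orthogonal_ker {f : E →ₗ[𝕜] F} (hf : f ∘ₗ f.adjoint = id) {x : E}
    (hx : x ∈ (ker f)ᗮ) : ‖f x‖ = ‖x‖ := by
  rw [orthogonal_ker] at hx
  obtain ⟨y, rfl⟩ := hx
  have hy : f (f.adjoint y) = y := LinearMap.congr_fun hf y
  have hinner : inner 𝕜 (f.adjoint y) (f.adjoint y) = inner 𝕜 y y := by
    rw [adjoint_inner_right, hy]
  rw [inner_self_eq_norm_sq_to_K, inner_self_eq_norm_sq_to_K] at hinner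
  rw [hy]
  exact ((sq_eq_sq₀ (norm_nonneg _) (norm_nonneg _)).mp (by exact_mod_cast hinner)).symm

end LinearMap

theorem Matrix.toEuclideanLin_comp_adjoint {m n : Type*} [Fintype m] [DecidableEq m]
    [Fintype n] [DecidableEq n] {A : Matrix m n 𝕜} (hA : A * A.conjTranspose = 1) :
    A.toEuclideanLin ∘ₗ A.toEuclideanLin.adjoint = LinearMap.id := by
  rw [← Matrix.toEuclideanLin_conjTranspose_eq_adjoint, ← Matrix.toLpLin_mul_same, hA,
    Matrix.toLpLin_one]

theorem Submodule.map_ne_orthogonal_of_finrank_lt {K : Submodule 𝕜 E} (g : E →ₗ[𝕜] E)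
    (hK : Module.finrank 𝕜 K < Module.finrank 𝕜 Kᗮ) : K.map g ≠ Kᗮ := by
  intro h
  have := Submodule.finrank_map_le g K
  rw [h] at this
  omega

end Submersion

theorem F12_apply (v : EuclideanSpace ℝ (Fin 7)) :
    F12 v = ![(v 0 + v 3) / Real.sqrt 2, (v 1 + v 4) / Real.sqrt 2,
        (v 2 + v 5) / Real.sqrt 2, (v 2 - v 5) / Real.sqrt 2] := by
  ext i
  fin_cases i <;>
    simp [F12, Matrix.toLpLin_apply, dotProduct, Fin.sum_univ_seven] <;> ring

theorem phi12_apply (v : EuclideanSpace ℝ (Fin 7)) :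
    phi12 v = ![v 3, v 4, v 5, -v 0, -v 1, -v 2, 0] := by
  ext i
  fin_cases i <;> simp [phi12, Matrix.toLpLin_apply, dotProduct, Fin.sum_univ_seven]

theorem F12_comp_adjoint : F12 ∘ₗ F12.adjoint = LinearMap.id := by
  refine Matrix.toEuclideanLin_comp_adjoint (m := Fin 4) (n := Fin 7) ?_
  have h2 : Real.sqrt 2 * Real.sqrt 2 = 2 := Real.mul_self_sqrt zero_le_two
  ext i j
  fin_cases i <;> fin_cases j <;>
    simp [Matrix.mul_apply, Fin.sum_univ_seven] <;> field_simp <;> linarith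

theorem ker_F12 : LinearMap.ker F12 = Submodule.span ℝ
      {(!₂[1, 0, 0, -1, 0, 0, 0] : EuclideanSpace ℝ (Fin 7)),
        !₂[0, 1, 0, 0, -1, 0, 0], !₂[0, 0, 0, 0, 0, 0, 1]} := by
  refine le_antisymm (fun v hv => ?_) ?_
  · have hcoord (i : Fin 4) : F12 v i = 0 := by rw [LinearMap.mem_ker.mp hv]; rfl
    have h03 : v 0 + v 3 = 0 := by simpa [F12_apply] using hcoord 0
    have h14 : v 1 + v 4 = 0 := by simpa [F12_apply] using hcoord 1
    have h25 : v 2 + v 5 = 0 := by simpa [F12_apply] using hcoord 2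
    have h2m5 : v 2 - v 5 = 0 := by simpa [F12_apply] using hcoord 3
    have hv : v = v 0 • !₂[1, 0, 0, -1, 0, 0, 0] + v 1 • !₂[0, 1, 0, 0, -1, 0, 0]
        + v 6 • !₂[0, 0, 0, 0, 0, 0, 1] := by
      ext i
      fin_cases i <;> simp <;> linarith
    rw [hv]
    exact add_mem (add_mem (Submodule.smul_mem _ _ (Submodule.subset_span (by simp)))
      (Submodule.smul_mem _ _ (Submodule.subset_span (by simp))))
      (Submodule.smul_mem _ _ (Submodule.subset_span (by simp)))
  · rw [Submodule.span_le]
    rintro _ (rfl | rfl | rfl) <;> ext i <;> fin_cases i <;> simp [F12_apply]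

theorem map_phi12_ker_F12_le : (LinearMap.ker F12).map phi12 ≤ (LinearMap.ker F12)ᗮ := by
  rw [ker_F12, Submodule.map_span]
  refine Submodule.isOrtho_span.mpr ?_
  rintro _ ⟨u, hu, rfl⟩ w hw
  simp only [Set.mem_insert_iff, Set.mem_singleton_iff] at hu hw
  rcases hu with rfl | rfl | rfl <;> rcases hw with rfl | rfl | rfl <;>
    simp [phi12_apply, PiLp.inner_apply, Fin.sum_univ_seven]

theorem xi12_mem_ker_F12 : xi12 ∈ LinearMap.ker F12 := by
  rw [ker_F12]
  exact Submodule.subset_span (by simp [xi12])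

/-- Example 5: `F` is an anti-invariant Riemannian submersion from
`ℝ⁷` with its standard cosymplectic structure, with vertical `ξ` and
`φ(ker F) ⊊ (ker F)^⊥`. -/
theorem example5_anti_invariant_submersion_proper_horizontal :
    (∀ v : EuclideanSpace ℝ (Fin 7),
      F12 v = ![(v 0 + v 3) / Real.sqrt 2, (v 1 + v 4) / Real.sqrt 2,
        (v 2 + v 5) / Real.sqrt 2, (v 2 - v 5) / Real.sqrt 2]) ∧
    (∀ v : EuclideanSpace ℝ (Fin 7),
      phi12 v = ![v 3, v 4, v 5, -v 0, -v 1, -v 2, 0]) ∧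
    Function.Surjective F12 ∧
    LinearMap.ker F12 = Submodule.span ℝ
      {(!₂[1, 0, 0, -1, 0, 0, 0] : EuclideanSpace ℝ (Fin 7)),
        !₂[0, 1, 0, 0, -1, 0, 0], !₂[0, 0, 0, 0, 0, 0, 1]} ∧
    (∀ X ∈ (LinearMap.ker F12)ᗮ, ‖F12 X‖ = ‖X‖) ∧
    (LinearMap.ker F12).map phi12 ≤ (LinearMap.ker F12)ᗮ ∧
    (LinearMap.ker F12).map phi12 ≠ (LinearMap.ker F12)ᗮ ∧
    xi12 ∈ LinearMap.ker F12 := by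
  have hF := F12_comp_adjoint
  have hsurj := LinearMap.surjective_of_comp_adjoint_eq_id hF
  refine ⟨F12_apply, phi12_apply, hsurj, ker_F12,
    fun X hX => LinearMap.norm_map_of_mem_orthogonal_ker hF hX, map_phi12_ker_F12_le,
    Submodule.map_ne_orthogonal_of_finrank_lt phi12 ?_, xi12_mem_ker_F12⟩
  exact LinearMap.finrank_ker_lt_finrank_orthogonal_ker hsurj (by simp)

end
end
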